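/- arXiv:1711.11558 — 3 statements merged into one kernel-verified Lean document; each statement's English description precedes it below -/
import Mathlib

section
/- Let (Ω, Σ) be a measurable space and μ, ν two σ-finite nonatomic measures on it such that ν(A) = ν(A′) whenever μ(A) = μ(A′). Then there exists c ∈ ℝ≥0 such that ν = c·μ. -/
/-!
Since `μ A = 0 = μ ∅` forces `ν A = 0`, we have `ν ≪ μ` and `ν = f • μ` with `f = dν/dμ`.
If `f` were not a.e. constant, there would be `a < b` with `{f < a}` and `{f > b}` both non-null.
By Sierpiński's theorem a nonatomic measure takes every intermediate value on subsets, so these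
two sets contain subsets of the same finite positive measure `m`; their `ν`-measures are at most
`a m` and at least `b m`, contradicting the hypothesis. The constant is finite as `ν` is σ-finite.
-/

open MeasureTheory ENNReal Set

namespace MeasureTheory

variable {Ω : Type*} [MeasurableSpace Ω] {μ ν : Measure Ω}

/-- Not Mathlib's `NoAtoms`, which only asks singletons to be null. -/
def Measure.IsNonatomic (μ : Measure Ω) : Prop :=
  ∀ A : Set Ω, MeasurableSet A → 0 < μ A → ∃ B ⊆ A, MeasurableSet B ∧ 0 < μ B ∧ μ B < μ A

lemma exists_subset_measure_le_two_mul (μ : Measure Ω) (S : Set Ω) {t : ℝ≥0∞} (ht : t ≠ ∞) :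
    ∃ D ⊆ S, MeasurableSet D ∧ μ D ≤ t ∧
      ∀ E ⊆ S, MeasurableSet E → μ E ≤ t → μ E ≤ 2 * μ D := by
  set s := sSup (μ '' {E | E ⊆ S ∧ MeasurableSet E ∧ μ E ≤ t})
  have hle : ∀ E ⊆ S, MeasurableSet E → μ E ≤ t → μ E ≤ s :=
    fun E hES hE hEt => le_sSup ⟨E, ⟨hES, hE, hEt⟩, rfl⟩
  rcases eq_or_ne s 0 with hs0 | hs0
  · exact ⟨∅, empty_subset _, .empty, by simp,
      fun E hES hE hEt => (hle E hES hE hEt).trans (by simp [hs0])⟩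
  have hst : s ≤ t := sSup_le (by rintro _ ⟨E, hE, rfl⟩; exact hE.2.2)
  obtain ⟨_, ⟨D, ⟨hDS, hD, hDt⟩, rfl⟩, hsD⟩ :=
    lt_sSup_iff.1 (ENNReal.half_lt_self hs0 (ne_top_of_le_ne_top ht hst))
  refine ⟨D, hDS, hD, hDt, fun E hES hE hEt => (hle E hES hE hEt).trans ?_⟩
  calc s = 2 * (s / 2) := (ENNReal.mul_div_cancel two_ne_zero ofNat_ne_top).symm
    _ ≤ 2 * μ D := by gcongr

namespace Measure.IsNonatomic

lemma exists_two_mul_le (hμ : μ.IsNonatomic) {A : Set Ω} (hA : MeasurableSet A)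
    (h0 : 0 < μ A) : ∃ B ⊆ A, MeasurableSet B ∧ 0 < μ B ∧ 2 * μ B ≤ μ A := by
  obtain ⟨B, hBA, hB, hB0, hBlt⟩ := hμ A hA h0
  have hsplit : μ (A \ B) + μ B = μ A := by
    rw [← measure_sdiff_add_inter A hB, inter_eq_right.2 hBA]
  rcases le_or_gt (2 * μ B) (μ A) with hle | hlt
  · exact ⟨B, hBA, hB, hB0, hle⟩
  refine ⟨A \ B, sdiff_subset, hA.diff hB, pos_iff_ne_zero.2 fun hAB => ?_, ?_⟩
  · rw [hAB, zero_add] at hsplit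
    exact hBlt.ne hsplit
  · have hlt' : μ (A \ B) < μ B := by
      rw [two_mul, ← hsplit] at hlt
      exact (ENNReal.add_lt_add_iff_right (hBlt.trans_le le_top).ne).1 hlt
    calc 2 * μ (A \ B) = μ (A \ B) + μ (A \ B) := two_mul _
      _ ≤ μ (A \ B) + μ B := by gcongr
      _ = μ A := hsplit

lemma exists_two_pow_mul_le (hμ : μ.IsNonatomic) {A : Set Ω} (hA : MeasurableSet A)
    (h0 : 0 < μ A) (n : ℕ) : ∃ B ⊆ A, MeasurableSet B ∧ 0 < μ B ∧ 2 ^ n * μ B ≤ μ A := by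
  induction n with
  | zero => exact ⟨A, subset_rfl, hA, h0, by simp⟩
  | succ n ih =>
    obtain ⟨B, hBA, hB, hB0, hBle⟩ := ih
    obtain ⟨C, hCB, hC, hC0, hCle⟩ := hμ.exists_two_mul_le hB hB0
    refine ⟨C, hCB.trans hBA, hC, hC0, ?_⟩
    calc 2 ^ (n + 1) * μ C = 2 ^ n * (2 * μ C) := by rw [pow_succ, mul_assoc]
      _ ≤ 2 ^ n * μ B := by gcongr
      _ ≤ μ A := hBle

lemma exists_measure_pos_lt (hμ : μ.IsNonatomic) {A : Set Ω} (hA : MeasurableSet A)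
    (h0 : 0 < μ A) {ε : ℝ≥0∞} (hε : 0 < ε) : ∃ B ⊆ A, MeasurableSet B ∧ 0 < μ B ∧ μ B < ε := by
  obtain ⟨A₀, hA₀A, hA₀, hA₀0, hA₀lt⟩ := hμ A hA h0
  obtain ⟨n, hn⟩ := ENNReal.exists_nat_mul_gt hε.ne' (hA₀lt.trans_le le_top).ne
  obtain ⟨B, hBA₀, hB, hB0, hBle⟩ := hμ.exists_two_pow_mul_le hA₀ hA₀0 n
  refine ⟨B, hBA₀.trans hA₀A, hB, hB0, lt_of_mul_lt_mul_left' (a := 2 ^ n) ?_⟩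
  calc 2 ^ n * μ B ≤ μ A₀ := hBle
    _ < n * ε := hn
    _ ≤ 2 ^ n * ε := by gcongr; exact_mod_cast Nat.lt_two_pow_self.le

/-- Sierpiński's theorem. The set is built greedily: at each step add a subset of the remainder
whose measure is at least half of what could still be added; a positive gap left at the end
would contain a small set that every step should have taken into account. -/
theorem exists_subset_measure_eq (hμ : μ.IsNonatomic) {A : Set Ω} (hA : MeasurableSet A)
    {r : ℝ≥0∞} (hr : r ≤ μ A) (hr_top : r ≠ ∞) : ∃ B ⊆ A, MeasurableSet B ∧ μ B = r := by
  choose D hDsub hD hDle hDmax using fun C : Set Ω =>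
    exists_subset_measure_le_two_mul μ (A \ C) (t := r - μ C)
      (ne_top_of_le_ne_top hr_top tsub_le_self)
  let B : ℕ → Set Ω := fun n => Nat.rec ∅ (fun _ C => C ∪ D C) n
  have hBsucc : ∀ n, B (n + 1) = B n ∪ D (B n) := fun n => rfl
  have hB : ∀ n, B n ⊆ A ∧ MeasurableSet (B n) ∧ μ (B n) ≤ r := by
    intro n
    induction n with
    | zero => exact ⟨empty_subset _, .empty, by simp [B]⟩
    | succ n ih =>
      obtain ⟨hBA, hBm, hBr⟩ := ih
      rw [hBsucc]
      refine ⟨union_subset hBA ((hDsub _).trans sdiff_subset), hBm.union (hD _), ?_⟩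
      calc μ (B n ∪ D (B n)) ≤ μ (B n) + μ (D (B n)) := measure_union_le _ _
        _ ≤ μ (B n) + (r - μ (B n)) := by gcongr; exact hDle _
        _ = r := add_tsub_cancel_of_le hBr
  have hBmono : Monotone B :=
    monotone_nat_of_le_succ fun n => by rw [hBsucc]; exact subset_union_left
  set L := ⋃ n, B n
  have hL : MeasurableSet L := .iUnion fun n => (hB n).2.1
  have hLr : μ L ≤ r := by
    rw [hBmono.measure_iUnion]
    exact iSup_le fun n => (hB n).2.2
  refine ⟨L, iUnion_subset fun n => (hB n).1, hL, le_antisymm hLr ?_⟩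
  by_contra! hlt
  have hgap : 0 < μ (A \ L) := (tsub_pos_of_lt (hlt.trans_le hr)).trans_le le_measure_sdiff
  obtain ⟨E, hEsub, hE, hE0, hElt⟩ :=
    hμ.exists_measure_pos_lt (hA.diff hL) hgap (tsub_pos_of_lt hlt)
  have hED : ∀ n, μ E ≤ 2 * μ (D (B n)) := fun n =>
    hDmax _ E (hEsub.trans (sdiff_subset_sdiff_right (subset_iUnion B n))) hE
      (hElt.le.trans (tsub_le_tsub_left (measure_mono (subset_iUnion B n)) r))
  have hgrow : ∀ n : ℕ, n * μ E ≤ 2 * μ (B n) := by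
    intro n
    induction n with
    | zero => simp
    | succ n ih =>
      rw [hBsucc, measure_union (disjoint_of_subset_right (hDsub _) disjoint_sdiff_right) (hD _),
        Nat.cast_succ, add_one_mul, mul_add]
      exact add_le_add ih (hED n)
  obtain ⟨n, hn⟩ := ENNReal.exists_nat_mul_gt hE0.ne' (mul_ne_top (ofNat_ne_top (n := 2)) hr_top)
  exact (hn.trans_le (hgrow n)).not_ge (by gcongr; exact (hB n).2.2)

lemma exists_subsets_measure_eq (hμ : μ.IsNonatomic) {A B : Set Ω} (hA : MeasurableSet A)
    (hB : MeasurableSet B) (hA0 : 0 < μ A) (hB0 : 0 < μ B) :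
    ∃ A' ⊆ A, ∃ B' ⊆ B, MeasurableSet A' ∧ MeasurableSet B' ∧ μ A' = μ B' ∧
      0 < μ A' ∧ μ A' ≠ ∞ := by
  obtain ⟨A₀, hA₀A, hA₀, hA₀0, hA₀lt⟩ := hμ A hA hA0
  obtain ⟨B₀, hB₀B, hB₀, hB₀0, -⟩ := hμ B hB hB0
  have hm_top : min (μ A₀) (μ B₀) ≠ ∞ :=
    ((min_le_left _ _).trans_lt (hA₀lt.trans_le le_top)).ne
  obtain ⟨A', hA'A₀, hA', hA'm⟩ := hμ.exists_subset_measure_eq hA₀ (min_le_left _ _) hm_top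
  obtain ⟨B', hB'B₀, hB', hB'm⟩ := hμ.exists_subset_measure_eq hB₀ (min_le_right _ _) hm_top
  exact ⟨A', hA'A₀.trans hA₀A, B', hB'B₀.trans hB₀B, hA', hB', hA'm.trans hB'm.symm,
    hA'm ▸ lt_min hA₀0 hB₀0, hA'm ▸ hm_top⟩

end Measure.IsNonatomic

theorem exists_ae_eq_const_of_forall_lt {β : Type*} [CompleteLinearOrder β] [DenselyOrdered β]
    [TopologicalSpace β] [FirstCountableTopology β] [OrderTopology β] {f : Ω → β}
    (hf : ∀ a b, a < b → μ {x | f x < a} = 0 ∨ μ {x | b < f x} = 0) :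
    ∃ c, f =ᵐ[μ] fun _ => c := by
  refine ⟨essInf f μ, ?_⟩
  have hsup : essSup f μ ≤ essInf f μ := by
    by_contra! hlt
    obtain ⟨a, ha, hab⟩ := exists_between hlt
    obtain ⟨b, hab, hb⟩ := exists_between hab
    rcases hf a b hab with h | h
    · exact ha.not_ge (le_essInf_of_ae_le a (ae_iff.2 (by simpa only [not_le] using h)))
    · exact hb.not_ge (essSup_le_of_ae_le b (ae_iff.2 (by simpa only [not_le] using h)))
  filter_upwards [ae_le_essSup (f := f), ae_essInf_le (f := f)] with x hsup_x hinf_x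
  exact le_antisymm (hsup_x.trans hsup) hinf_x

lemma Measure.absolutelyContinuous_of_forall_measure_eq
    (h : ∀ A A' : Set Ω, MeasurableSet A → MeasurableSet A' → μ A = μ A' → ν A = ν A') :
    ν ≪ μ :=
  .mk fun A hA h0 => by simpa using h A ∅ hA .empty (by simp [h0])

lemma Measure.IsNonatomic.measure_rnDeriv_lt_eq_zero_or (hμ : μ.IsNonatomic)
    [ν.HaveLebesgueDecomposition μ] [SFinite μ] (hνμ : ν ≪ μ)
    (h : ∀ A A' : Set Ω, MeasurableSet A → MeasurableSet A' → μ A = μ A' → ν A = ν A')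
    {a b : ℝ≥0∞} (hab : a < b) :
    μ {x | ν.rnDeriv μ x < a} = 0 ∨ μ {x | b < ν.rnDeriv μ x} = 0 := by
  by_contra! hpos
  have hf := Measure.measurable_rnDeriv ν μ
  obtain ⟨A, hAsub, B, hBsub, hA, hB, hAB, hA0, hA_top⟩ := hμ.exists_subsets_measure_eq
    (measurableSet_lt hf measurable_const) (measurableSet_lt measurable_const hf)
    (pos_iff_ne_zero.2 hpos.1) (pos_iff_ne_zero.2 hpos.2)
  have hνA : ν A ≤ a * μ A := by
    rw [← Measure.setLIntegral_rnDeriv hνμ A, ← setLIntegral_const]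
    exact setLIntegral_mono measurable_const fun x hx => (hAsub hx).le
  have hνB : b * μ B ≤ ν B := by
    rw [← setLIntegral_const]
    exact (setLIntegral_mono hf fun x hx => (hBsub hx).le).trans (Measure.setLIntegral_rnDeriv_le B)
  refine (h A B hA hB hAB).not_lt ?_
  calc ν A ≤ a * μ A := hνA
    _ < b * μ A := ENNReal.mul_lt_mul_left hA0.ne' hA_top hab
    _ = b * μ B := by rw [hAB]
    _ ≤ ν B := hνB

end MeasureTheory

theorem stmt11_general {Ω : Type*} [MeasurableSpace Ω] (μ ν : Measure Ω)
    [SigmaFinite μ] [SigmaFinite ν]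
    (hμna : ∀ A : Set Ω, MeasurableSet A → 0 < μ A →
      ∃ B ⊆ A, MeasurableSet B ∧ 0 < μ B ∧ μ B < μ A)
    (h : ∀ A A' : Set Ω, MeasurableSet A → MeasurableSet A' →
      μ A = μ A' → ν A = ν A') :
    ∃ c : NNReal, ν = c • μ := by
  have hνμ : ν ≪ μ := Measure.absolutelyContinuous_of_forall_measure_eq h
  obtain ⟨c, hc⟩ := exists_ae_eq_const_of_forall_lt fun a b hab =>
    Measure.IsNonatomic.measure_rnDeriv_lt_eq_zero_or hμna hνμ h hab
  refine ⟨c.toNNReal, ?_⟩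
  calc ν = μ.withDensity (ν.rnDeriv μ) := (Measure.withDensity_rnDeriv_eq ν μ hνμ).symm
    _ = μ.withDensity fun _ => (c.toNNReal : ℝ≥0∞) := by
      refine withDensity_congr_ae ?_
      filter_upwards [hc, Measure.rnDeriv_lt_top ν μ] with x hx hlt
      rw [hx, ENNReal.coe_toNNReal (hx ▸ hlt).ne]
    _ = c.toNNReal • μ := by rw [withDensity_const, ENNReal.smul_def]

/-- σ-finite version of Statement 10: `ν = c • μ`. -/
theorem stmt11 {Ω : Type*} [MeasurableSpace Ω] (μ ν : Measure Ω)
    [SigmaFinite μ] [SigmaFinite ν]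
    (hμna : ∀ A : Set Ω, MeasurableSet A → 0 < μ A →
      ∃ B ⊆ A, MeasurableSet B ∧ 0 < μ B ∧ μ B < μ A)
    (hνna : ∀ A : Set Ω, MeasurableSet A → 0 < ν A →
      ∃ B ⊆ A, MeasurableSet B ∧ 0 < ν B ∧ ν B < ν A)
    (h : ∀ A A' : Set Ω, MeasurableSet A → MeasurableSet A' →
      μ A = μ A' → ν A = ν A') :
    ∃ c : NNReal, ν = c • μ :=
  stmt11_general μ ν hμna h
end

section
/- Let (uₙ) be a normalized unconditional basis of a Banach space E, giving E an atomic Banach lattice order. Then the map V : E → ℝ₊ defined by V(Σₙ aₙuₙ) = Σₙ n·|aₙ|ⁿ is a continuous valuation on E that is unbounded on norm-bounded sets (V(uₙ) = n while ‖uₙ‖ = 1). -/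
/-!
Since the expansion of `f - g` is the difference of the expansions of `f` and `g`, the bound
`C |aₙ(f)| ≤ ‖f‖` makes every coefficient functional `C⁻¹`-Lipschitz, uniformly in `n`; and the
coefficients of each `f` tend to `0` because `‖aₙ(f) uₙ‖ = |aₙ(f)|`. Hence near any `f₀` the
coefficients beyond some index are uniformly at most `1/2`, so `Σ n |aₙ|ⁿ` is dominated there by
`Σ n 2⁻ⁿ` and converges locally uniformly. The valuation identity holds termwise, because
`{max x y, min x y} = {x, y}`.
-/

open Filter Topology

section SequenceValuation

lemma natCast_mul_zero_pow (n : ℕ) : (n : ℝ) * 0 ^ n = 0 := by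
  cases n <;> simp

lemma norm_natCast_mul_abs_pow_le {y : ℝ} (hy : |y| ≤ 1 / 2) (n : ℕ) :
    ‖(n : ℝ) * |y| ^ n‖ ≤ n * (1 / 2) ^ n := by
  rw [Real.norm_of_nonneg (by positivity)]
  gcongr

lemma summable_natCast_mul_half_pow : Summable fun n : ℕ => (n : ℝ) * (1 / 2 : ℝ) ^ n :=
  (hasSum_coe_mul_geometric_of_norm_lt_one (by norm_num [Real.norm_eq_abs, abs_of_pos])).summable

lemma summable_natCast_mul_abs_pow {x : ℕ → ℝ} (hx : Tendsto x atTop (𝓝 0)) :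
    Summable fun n : ℕ => (n : ℝ) * |x n| ^ n := by
  refine summable_natCast_mul_half_pow.of_norm_bounded_eventually_nat ?_
  filter_upwards [hx.abs.eventually (ge_mem_nhds (by norm_num : |(0 : ℝ)| < 1 / 2))] with n hn
  exact norm_natCast_mul_abs_pow_le hn n

lemma continuous_tsum_natCast_mul_abs_pow {X : Type*} [TopologicalSpace X] {c : X → ℕ → ℝ}
    (hc : Equicontinuous fun n x => c x n) (h0 : ∀ x, Tendsto (c x) atTop (𝓝 0)) :
    Continuous fun x => ∑' n : ℕ, (n : ℝ) * |c x n| ^ n := by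
  have hpartial (N : ℕ) : Continuous fun x => ∑ n ∈ Finset.range N, (n : ℝ) * |c x n| ^ n :=
    continuous_finsetSum _ fun n _ => continuous_const.mul ((hc.continuous n).abs.pow n)
  refine TendstoLocallyUniformly.continuous (p := atTop) ?_ (Frequently.of_forall hpartial)
  refine tendstoLocallyUniformly_of_forall_exists_nhds fun x₀ => ?_
  have hnear : ∀ᶠ x in 𝓝 x₀, ∀ n, dist (c x₀ n) (c x n) < 1 / 4 :=
    Metric.equicontinuousAt_iff_right.mp (hc x₀) _ (by norm_num)
  refine ⟨_, hnear, tendstoUniformlyOn_tsum_nat_eventually summable_natCast_mul_half_pow ?_⟩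
  filter_upwards [(h0 x₀).abs.eventually (ge_mem_nhds (by norm_num : |(0 : ℝ)| < 1 / 4))]
    with n hn x hx
  refine norm_natCast_mul_abs_pow_le ?_ n
  have hclose := hx n
  rw [Real.dist_eq, abs_sub_comm] at hclose
  linarith [abs_sub_abs_le_abs_sub (c x n) (c x₀ n)]

lemma map_max_add_map_min {α β : Type*} [LinearOrder α] [AddCommMagma β] (φ : α → β)
    (x y : α) : φ (max x y) + φ (min x y) = φ x + φ y := by
  rcases le_total x y with h | h
  · rw [max_eq_right h, min_eq_left h, add_comm]
  · rw [max_eq_left h, min_eq_right h]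

end SequenceValuation

section BasisCoefficients

variable {E : Type*} [NormedAddCommGroup E] [NormedSpace ℝ E] {u : ℕ → E} {a : E → ℕ → ℝ}

lemma coeff_zero (huniq : ∀ (f : E) (b : ℕ → ℝ), HasSum (fun n => b n • u n) f → b = a f) :
    a 0 = 0 :=
  (huniq 0 0 (by simp)).symm

lemma coeff_basis (huniq : ∀ (f : E) (b : ℕ → ℝ), HasSum (fun n => b n • u n) f → b = a f)
    (m : ℕ) : a (u m) = Pi.single m 1 := by
  refine (huniq _ _ ?_).symm
  convert hasSum_ite_eq m (u m) using 2 with n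
  by_cases h : n = m
  · subst h; simp
  · simp [h]

lemma coeff_sub (hrepr : ∀ f : E, HasSum (fun n => a f n • u n) f)
    (huniq : ∀ (f : E) (b : ℕ → ℝ), HasSum (fun n => b n • u n) f → b = a f) (f g : E) :
    a (f - g) = a f - a g :=
  (huniq _ _ (by simpa only [Pi.sub_apply, sub_smul] using (hrepr f).sub (hrepr g))).symm

lemma tendsto_coeff_atTop_zero (hnorm : ∀ n, ‖u n‖ = 1)
    (hrepr : ∀ f : E, HasSum (fun n => a f n • u n) f) (f : E) :
    Tendsto (a f) atTop (𝓝 0) := by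
  rw [tendsto_zero_iff_norm_tendsto_zero]
  simpa [norm_smul, hnorm] using tendsto_zero_iff_norm_tendsto_zero.mp
    (hrepr f).summable.tendsto_atTop_zero

lemma lipschitzWith_coeff (hrepr : ∀ f : E, HasSum (fun n => a f n • u n) f)
    (huniq : ∀ (f : E) (b : ℕ → ℝ), HasSum (fun n => b n • u n) f → b = a f)
    {C : ℝ} (hC : 0 < C) (hunc : ∀ (f : E) (n : ℕ), C * |a f n| ≤ ‖f‖) (n : ℕ) :
    LipschitzWith (Real.toNNReal C⁻¹) (a · n) := by
  refine LipschitzWith.of_dist_le_mul fun f g => ?_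
  rw [Real.dist_eq, dist_eq_norm, Real.coe_toNNReal _ (by positivity), ← Pi.sub_apply,
    ← coeff_sub hrepr huniq, inv_mul_eq_div, le_div_iff₀ hC, mul_comm]
  exact hunc (f - g) n

end BasisCoefficients

theorem stmt15_general {E : Type*} [NormedAddCommGroup E] [NormedSpace ℝ E]
    [Lattice E]
    (u : ℕ → E) (a : E → ℕ → ℝ)
    (hnorm : ∀ n, ‖u n‖ = 1)
    (hrepr : ∀ f : E, HasSum (fun n => a f n • u n) f)
    (huniq : ∀ (f : E) (b : ℕ → ℝ), HasSum (fun n => b n • u n) f → b = a f)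
    (C : ℝ) (hC : 0 < C)
    (hunc : ∀ (f : E) (n : ℕ), C * |a f n| ≤ ‖f‖)
    (hsup : ∀ (f g : E) (n : ℕ), a (f ⊔ g) n = max (a f n) (a g n))
    (hinf : ∀ (f g : E) (n : ℕ), a (f ⊓ g) n = min (a f n) (a g n))
    (V : E → ℝ) (hVdef : ∀ f : E, V f = ∑' n : ℕ, (n : ℝ) * |a f n| ^ n) :
    (∀ f : E, Summable (fun n : ℕ => (n : ℝ) * |a f n| ^ n)) ∧
    (∀ f : E, 0 ≤ V f) ∧
    (∀ f g : E, V (f ⊔ g) + V (f ⊓ g) = V f + V g) ∧ V 0 = 0 ∧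
    Continuous V ∧
    (∀ n : ℕ, V (u n) = n) := by
  obtain rfl : V = fun f => ∑' n : ℕ, (n : ℝ) * |a f n| ^ n := funext hVdef
  beta_reduce
  have hsum (f : E) : Summable fun n : ℕ => (n : ℝ) * |a f n| ^ n :=
    summable_natCast_mul_abs_pow (tendsto_coeff_atTop_zero hnorm hrepr f)
  refine ⟨hsum, fun f => tsum_nonneg fun n => by positivity, fun f g => ?_, ?_, ?_, fun m => ?_⟩
  · rw [← (hsum _).tsum_add (hsum _), ← (hsum f).tsum_add (hsum g)]
    congr 1 with n
    rw [hsup, hinf]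
    exact map_max_add_map_min (fun t : ℝ => (n : ℝ) * |t| ^ n) _ _
  · simp [coeff_zero huniq, natCast_mul_zero_pow]
  · have hequi : Equicontinuous fun n f => a f n :=
      (LipschitzWith.uniformEquicontinuous _ _
        (lipschitzWith_coeff hrepr huniq hC hunc)).equicontinuous
    exact continuous_tsum_natCast_mul_abs_pow hequi (tendsto_coeff_atTop_zero hnorm hrepr)
  · rw [tsum_eq_single m fun n hn => by simp [coeff_basis huniq, hn, natCast_mul_zero_pow]]
    simp [coeff_basis huniq]

/-- For a Banach space `E` with a normalized unconditional basis
`(uₙ)` (coefficients `a`), with lattice operations given coordinatewise,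
`V f = Σₙ n·|aₙ(f)|ⁿ` is a continuous valuation unbounded on norm-bounded sets
(`V uₙ = n`, `‖uₙ‖ = 1`). -/
theorem stmt15 {E : Type*} [NormedAddCommGroup E] [NormedSpace ℝ E] [CompleteSpace E]
    [Lattice E]
    (u : ℕ → E) (a : E → ℕ → ℝ)
    (hnorm : ∀ n, ‖u n‖ = 1)
    (hrepr : ∀ f : E, HasSum (fun n => a f n • u n) f)
    (huniq : ∀ (f : E) (b : ℕ → ℝ), HasSum (fun n => b n • u n) f → b = a f)
    (C : ℝ) (hC : 0 < C)
    (hunc : ∀ (f : E) (n : ℕ), C * |a f n| ≤ ‖f‖)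
    (hsup : ∀ (f g : E) (n : ℕ), a (f ⊔ g) n = max (a f n) (a g n))
    (hinf : ∀ (f g : E) (n : ℕ), a (f ⊓ g) n = min (a f n) (a g n))
    (V : E → ℝ) (hVdef : ∀ f : E, V f = ∑' n : ℕ, (n : ℝ) * |a f n| ^ n) :
    (∀ f : E, Summable (fun n : ℕ => (n : ℝ) * |a f n| ^ n)) ∧
    (∀ f : E, 0 ≤ V f) ∧
    (∀ f g : E, V (f ⊔ g) + V (f ⊓ g) = V f + V g) ∧ V 0 = 0 ∧
    Continuous V ∧
    (∀ n : ℕ, V (u n) = n) :=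
  stmt15_general u a hnorm hrepr huniq C hC hunc hsup hinf V hVdef
end

section
/- Let (Ω, Σ, μ) be a nonatomic finite measure space with μ(Ω) > 0, 1 ≤ p < ∞, and θ : ℝ → ℝ continuous and nonnegative with ∫_Ω θ(f(t)) dμ(t) < ∞ for every f ∈ Lᵖ(μ). Then there exist a, b ∈ ℝ with θ(λ) ≤ a·|λ|^p + b for all λ ∈ ℝ. -/
/-!
If `θ` were not dominated by any `a |λ|^p + b`, we could pick `λₙ` with
`θ(λₙ) > 2ⁿ⁺¹ (|λₙ|^p + 1) / μ(Ω)` and, by Sierpiński's theorem on nonatomic measures, disjoint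
sets `Aₙ` with `μ(Aₙ) = μ(Ω) / (2ⁿ⁺¹ (|λₙ|^p + 1))`. The step function equal to `λₙ` on `Aₙ`
and to `0` elsewhere has `∫ |f|^p ≤ μ(Ω)`, while `∫ θ ∘ f ≥ ∑ₙ 1 = ∞`.
-/

open MeasureTheory Set Function
open scoped ENNReal NNReal

namespace MeasureTheory.Measure

variable {Ω : Type*} [MeasurableSpace Ω] {μ : Measure Ω}

def IsNonatomic_s19 (μ : Measure Ω) : Prop :=
  ∀ A : Set Ω, MeasurableSet A → 0 < μ A → ∃ B ⊆ A, MeasurableSet B ∧ 0 < μ B ∧ μ B < μ A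

lemma exists_subset_almost_maximal_measure [IsFiniteMeasure μ] (T : Set Ω) (d : ℝ≥0∞) :
    ∃ C ⊆ T, MeasurableSet C ∧ μ C ≤ d ∧
      ∀ C' ⊆ T, MeasurableSet C' → μ C' ≤ d → μ C' ≤ 2 * μ C := by
  set t := ⨆ (C : Set Ω) (_ : C ⊆ T ∧ MeasurableSet C ∧ μ C ≤ d), μ C
  have le_t : ∀ C' ⊆ T, MeasurableSet C' → μ C' ≤ d → μ C' ≤ t :=
    fun C' hC'T hC' hC'd => le_iSup₂ (f := fun C (_ : C ⊆ T ∧ MeasurableSet C ∧ μ C ≤ d) => μ C)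
      C' ⟨hC'T, hC', hC'd⟩
  rcases eq_or_ne t 0 with ht | ht
  · refine ⟨∅, empty_subset T, .empty, by simp, fun C' h₁ h₂ h₃ => ?_⟩
    simpa [ht] using le_t C' h₁ h₂ h₃
  have ht_top : t ≠ ∞ := ne_top_of_le_ne_top (measure_ne_top μ univ)
    (iSup₂_le fun C _ => measure_mono (subset_univ C))
  obtain ⟨C, hlt⟩ := lt_iSup_iff.1 (ENNReal.half_lt_self ht ht_top)
  obtain ⟨⟨hCT, hC, hCd⟩, hlt⟩ := lt_iSup_iff.1 hlt
  refine ⟨C, hCT, hC, hCd, fun C' h₁ h₂ h₃ => (le_t C' h₁ h₂ h₃).trans ?_⟩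
  calc t = 2 * (t / 2) := (ENNReal.mul_div_cancel two_ne_zero ENNReal.ofNat_ne_top).symm
    _ ≤ 2 * μ C := by gcongr

namespace IsNonatomic_s19

lemma exists_subset_measure_pos_le_half (hμ : μ.IsNonatomic_s19) {S : Set Ω} (hS : MeasurableSet S)
    (hS₀ : 0 < μ S) : ∃ B ⊆ S, MeasurableSet B ∧ 0 < μ B ∧ μ B ≤ μ S / 2 := by
  obtain ⟨B, hBS, hB, hB₀, hBS_lt⟩ := hμ S hS hS₀
  rcases le_or_gt (μ B) (μ S / 2) with hle | hgt
  · exact ⟨B, hBS, hB, hB₀, hle⟩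
  have hdiff : μ (S \ B) = μ S - μ B := measure_sdiff hBS hB.nullMeasurableSet hBS_lt.ne_top
  refine ⟨S \ B, sdiff_subset, hS.diff hB, by rwa [hdiff, tsub_pos_iff_lt], ?_⟩
  rw [hdiff, tsub_le_iff_right]
  calc μ S = μ S / 2 + μ S / 2 := (ENNReal.add_halves _).symm
    _ ≤ μ S / 2 + μ B := by gcongr

lemma exists_subset_measure_pos_le [IsFiniteMeasure μ] (hμ : μ.IsNonatomic_s19) {S : Set Ω}
    (hS : MeasurableSet S) (hS₀ : 0 < μ S) {δ : ℝ≥0∞} (hδ : 0 < δ) :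
    ∃ B ⊆ S, MeasurableSet B ∧ 0 < μ B ∧ μ B ≤ δ := by
  have halving : ∀ n : ℕ, ∃ B ⊆ S, MeasurableSet B ∧ 0 < μ B ∧ μ B ≤ 2⁻¹ ^ n * μ S := by
    intro n
    induction n with
    | zero => exact ⟨S, subset_rfl, hS, hS₀, by simp⟩
    | succ n ih =>
      obtain ⟨B, hBS, hB, hB₀, hBle⟩ := ih
      obtain ⟨C, hCB, hC, hC₀, hCle⟩ := hμ.exists_subset_measure_pos_le_half hB hB₀
      refine ⟨C, hCB.trans hBS, hC, hC₀, hCle.trans ?_⟩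
      rw [pow_succ', mul_assoc, ENNReal.div_eq_inv_mul]
      gcongr
  obtain ⟨n, hn⟩ :=
    ENNReal.exists_inv_two_pow_lt (ENNReal.div_pos hδ.ne' (measure_ne_top μ S)).ne'
  obtain ⟨B, hBS, hB, hB₀, hBle⟩ := halving n
  refine ⟨B, hBS, hB, hB₀, hBle.trans ?_⟩
  calc 2⁻¹ ^ n * μ S ≤ δ / μ S * μ S := by gcongr
    _ ≤ δ := (ENNReal.div_mul_cancel hS₀.ne' (measure_ne_top μ S)).le

/-- Sierpiński's theorem. -/
lemma exists_subset_measure_eq_s19 [IsFiniteMeasure μ] (hμ : μ.IsNonatomic_s19) {S : Set Ω}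
    (hS : MeasurableSet S) {ε : ℝ≥0∞} (hε : ε ≤ μ S) : ∃ B ⊆ S, MeasurableSet B ∧ μ B = ε := by
  choose P hPsub hP hPle hPmax using
    fun D : Set Ω => exists_subset_almost_maximal_measure (μ := μ) (S \ D) (ε - μ D)
  obtain ⟨D, hD_zero, hD_succ⟩ :
      ∃ D : ℕ → Set Ω, D 0 = ∅ ∧ ∀ n, D (n + 1) = D n ∪ P (D n) :=
    ⟨fun n => Nat.rec ∅ (fun _ Dn => Dn ∪ P Dn) n, rfl, fun _ => rfl⟩
  have hD : ∀ n, MeasurableSet (D n) ∧ D n ⊆ S ∧ μ (D n) ≤ ε := by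
    intro n
    induction n with
    | zero => simp [hD_zero]
    | succ n ih =>
      obtain ⟨hDn, hDS, hDε⟩ := ih
      rw [hD_succ]
      refine ⟨hDn.union (hP _), union_subset hDS ((hPsub _).trans sdiff_subset), ?_⟩
      calc μ (D n ∪ P (D n)) ≤ μ (D n) + μ (P (D n)) := measure_union_le _ _
        _ ≤ μ (D n) + (ε - μ (D n)) := by gcongr; exact hPle _
        _ = ε := add_tsub_cancel_of_le hDε
  have hD_mono : Monotone D := monotone_nat_of_le_succ fun n => hD_succ n ▸ subset_union_left
  have hB : MeasurableSet (⋃ n, D n) := .iUnion fun n => (hD n).1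
  have hBS : ⋃ n, D n ⊆ S := iUnion_subset fun n => (hD n).2.1
  have hBε : μ (⋃ n, D n) ≤ ε := by
    rw [hD_mono.measure_iUnion]
    exact iSup_le fun n => (hD n).2.2
  refine ⟨⋃ n, D n, hBS, hB, le_antisymm hBε ?_⟩
  by_contra! hlt
  have hSB : 0 < μ (S \ ⋃ n, D n) := by
    rw [measure_sdiff hBS hB.nullMeasurableSet (measure_ne_top μ _), tsub_pos_iff_lt]
    exact hlt.trans_le hε
  -- a fixed positive piece stays admissible at every step, so every step adds at least half of it
  obtain ⟨C, hCsub, hC, hC₀, hCle⟩ :=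
    hμ.exists_subset_measure_pos_le (hS.diff hB) hSB (tsub_pos_of_lt hlt)
  have hP_large : ∀ n, μ C ≤ 2 * μ (P (D n)) := fun n =>
    hPmax (D n) C (hCsub.trans (sdiff_subset_sdiff_right (subset_iUnion D n))) hC
      (hCle.trans (tsub_le_tsub_left (measure_mono (subset_iUnion D n)) ε))
  have hgrowth : ∀ n : ℕ, n * μ C ≤ 2 * μ (D n) := by
    intro n
    induction n with
    | zero => simp
    | succ n ih =>
      have hdisj : Disjoint (D n) (P (D n)) := disjoint_sdiff_right.mono_right (hPsub _)
      rw [hD_succ, measure_union hdisj (hP _), mul_add, Nat.cast_succ, add_mul, one_mul]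
      exact add_le_add ih (hP_large n)
  obtain ⟨n, hn⟩ := ENNReal.exists_nat_mul_gt (b := 2 * μ univ) hC₀.ne' (by finiteness)
  exact (hn.trans_le (hgrowth n)).not_ge (by gcongr; exact subset_univ _)

lemma exists_pairwise_disjoint_measure_eq [IsFiniteMeasure μ] (hμ : μ.IsNonatomic_s19)
    {m : ℕ → ℝ≥0∞} (hm : ∑' n, m n ≤ μ univ) :
    ∃ A : ℕ → Set Ω, (∀ n, MeasurableSet (A n)) ∧ Pairwise (Disjoint on A) ∧
      ∀ n, μ (A n) = m n := by
  choose! P hPsub hP hPμ using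
    fun (R : Set Ω) (n : ℕ) (h : MeasurableSet R ∧ m n ≤ μ R) =>
      hμ.exists_subset_measure_eq_s19 h.1 h.2
  obtain ⟨R, hR_zero, hR_succ⟩ :
      ∃ R : ℕ → Set Ω, R 0 = univ ∧ ∀ n, R (n + 1) = R n \ P (R n) n :=
    ⟨fun n => Nat.rec univ (fun k Rk => Rk \ P Rk k) n, rfl, fun _ => rfl⟩
  have hR : ∀ n, MeasurableSet (R n) ∧ ∑' k, m (k + n) ≤ μ (R n) := by
    intro n
    induction n with
    | zero => exact ⟨hR_zero ▸ .univ, by simpa [hR_zero] using hm⟩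
    | succ n ih =>
      obtain ⟨hRn, hmR⟩ := ih
      rw [tsum_eq_zero_add' ENNReal.summable, zero_add] at hmR
      have hadm : MeasurableSet (R n) ∧ m n ≤ μ (R n) := ⟨hRn, le_self_add.trans hmR⟩
      rw [hR_succ]
      refine ⟨hRn.diff (hP _ _ hadm), ?_⟩
      rw [measure_sdiff (hPsub _ _ hadm) (hP _ _ hadm).nullMeasurableSet
        (measure_ne_top _ _), hPμ _ _ hadm]
      refine ENNReal.le_sub_of_add_le_left (ne_top_of_le_ne_top (measure_ne_top μ _) hadm.2) ?_
      simpa only [add_assoc, add_comm 1 n] using hmR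
  have hadm : ∀ n, MeasurableSet (R n) ∧ m n ≤ μ (R n) := fun n =>
    ⟨(hR n).1, by simpa using (ENNReal.le_tsum 0).trans (hR n).2⟩
  have hR_anti : Antitone R := antitone_nat_of_succ_le fun n => hR_succ n ▸ sdiff_subset
  refine ⟨fun n => P (R n) n, fun n => hP _ _ (hadm n), ?_, fun n => hPμ _ _ (hadm n)⟩
  refine (pairwise_disjoint_on _).2 fun i j hij => ?_
  have hA_sub : P (R j) j ⊆ R i \ P (R i) i :=
    hR_succ i ▸ (hPsub _ _ (hadm j)).trans (hR_anti hij)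
  exact disjoint_sdiff_right.mono_right hA_sub

end IsNonatomic_s19
end MeasureTheory.Measure

namespace MeasureTheory

variable {Ω : Type*} [MeasurableSpace Ω] {μ : Measure Ω}

lemma exists_measurable_eqOn_of_pairwise_disjoint {β : Type*} [MeasurableSpace β] [Zero β]
    {A : ℕ → Set Ω} (hA : ∀ n, MeasurableSet (A n)) (hd : Pairwise (Disjoint on A)) (c : ℕ → β) :
    ∃ f : Ω → β, Measurable f ∧ (∀ n, EqOn f (fun _ => c n) (A n)) ∧ EqOn f 0 (⋃ n, A n)ᶜ := by
  let t : Option ℕ → Set Ω := fun i => i.elim (⋃ n, A n)ᶜ A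
  have ht : Pairwise (Disjoint on t) := by
    rintro (_ | i) (_ | j) hij
    · exact absurd rfl hij
    · exact disjoint_compl_left.mono_right (subset_iUnion A j)
    · exact disjoint_compl_right.mono_left (subset_iUnion A i)
    · exact hd (Option.some_injective _ |>.ne_iff.1 hij)
  obtain ⟨f, hf, hft⟩ := exists_measurable_piecewise t
    (fun i => i.rec (MeasurableSet.iUnion hA).compl hA) (fun i => i.elim 0 fun n _ => c n)
    (fun i => i.rec measurable_const fun _ => measurable_const)
    fun i j hij => by simp [(ht hij).inter_eq]
  exact ⟨f, hf, fun n => hft (some n), hft none⟩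

lemma lintegral_comp_eq_tsum_add {β : Type*} [Zero β] {A : ℕ → Set Ω}
    (hA : ∀ n, MeasurableSet (A n)) (hd : Pairwise (Disjoint on A)) {f : Ω → β} {c : ℕ → β}
    (hfA : ∀ n, EqOn f (fun _ => c n) (A n)) (hf₀ : EqOn f 0 (⋃ n, A n)ᶜ) (g : β → ℝ≥0∞) :
    ∫⁻ x, g (f x) ∂μ = ∑' n, g (c n) * μ (A n) + g 0 * μ (⋃ n, A n)ᶜ := by
  rw [← lintegral_add_compl _ (MeasurableSet.iUnion hA), lintegral_iUnion hA hd,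
    setLIntegral_congr_fun (g := fun _ => g 0) (MeasurableSet.iUnion hA).compl
      (fun x hx => congrArg g (hf₀ hx)), setLIntegral_const]
  congr 1
  refine tsum_congr fun n => ?_
  rw [setLIntegral_congr_fun (g := fun _ => g (c n)) (hA n) (fun x hx => congrArg g (hfA n hx)),
    setLIntegral_const]

lemma Measure.IsNonatomic_s19.exists_memLp_lintegral_eq_top [IsFiniteMeasure μ]
    (hμ : μ.IsNonatomic_s19) (hμ₀ : μ univ ≠ 0) (p : ℝ≥0) {Φ : ℝ → ℝ≥0∞}
    (hΦ : ∀ C ≠ ∞, ∃ l, C * (‖l‖ₑ ^ (p : ℝ) + 1) < Φ l) :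
    ∃ f : Ω → ℝ, MemLp f p μ ∧ ∫⁻ x, Φ (f x) ∂μ = ∞ := by
  set q : ℕ → ℝ≥0∞ := fun n => 2⁻¹ ^ (n + 1) * μ univ
  have hq_sum : ∑' n, q n = μ univ := by
    rw [ENNReal.tsum_mul_right, ENNReal.tsum_geometric_add_one, ENNReal.one_sub_inv_two,
      ENNReal.mul_inv_cancel (by simp) (by simp), one_mul]
  have hq₀ : ∀ n, q n ≠ 0 := fun n => by simp [q, hμ₀]
  have hq_top : ∀ n, q n ≠ ∞ := fun n => ENNReal.mul_ne_top (by simp) (measure_ne_top μ univ)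
  choose l hl using fun n => hΦ (q n)⁻¹ (ENNReal.inv_ne_top.2 (hq₀ n))
  set w : ℕ → ℝ≥0∞ := fun n => ‖l n‖ₑ ^ (p : ℝ) + 1
  have hw₀ : ∀ n, w n ≠ 0 := fun n => by simp [w]
  have hw_top : ∀ n, w n ≠ ∞ := fun n => by simp [w]
  obtain ⟨A, hA, hd, hAμ⟩ := hμ.exists_pairwise_disjoint_measure_eq (m := fun n => q n / w n) <|
    hq_sum ▸ ENNReal.tsum_le_tsum fun n =>
      ENNReal.div_le_of_le_mul (le_mul_of_one_le_right' le_add_self)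
  obtain ⟨f, hf, hfA, hf₀⟩ := exists_measurable_eqOn_of_pairwise_disjoint hA hd l
  refine ⟨f, ?_, ?_⟩
  · rcases eq_or_ne p 0 with rfl | hp₀
    · exact memLp_zero_iff_aestronglyMeasurable.2 hf.aestronglyMeasurable
    refine ⟨hf.aestronglyMeasurable, (eLpNorm_lt_top_iff_lintegral_rpow_enorm_lt_top
      (by exact_mod_cast hp₀) ENNReal.coe_ne_top).2 ?_⟩
    rw [ENNReal.coe_toReal, lintegral_comp_eq_tsum_add hA hd hfA hf₀ (fun y => ‖y‖ₑ ^ (p : ℝ))]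
    simp only [hAμ, enorm_zero, ENNReal.zero_rpow_of_pos (NNReal.coe_pos.2 (pos_iff_ne_zero.2 hp₀)),
      zero_mul, add_zero]
    calc ∑' n, ‖l n‖ₑ ^ (p : ℝ) * (q n / w n) ≤ ∑' n, q n :=
          ENNReal.tsum_le_tsum fun n => (mul_le_mul_left le_self_add _).trans ENNReal.mul_div_le
      _ < ∞ := hq_sum ▸ measure_lt_top μ univ
  · refine top_le_iff.1 ?_
    rw [lintegral_comp_eq_tsum_add hA hd hfA hf₀ Φ,
      ← ENNReal.tsum_const_eq_top_of_ne_zero (α := ℕ) one_ne_zero]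
    refine le_add_right (ENNReal.tsum_le_tsum fun n => ?_)
    calc (1 : ℝ≥0∞) = (q n)⁻¹ * w n * (q n / w n) := by
          rw [mul_assoc, ENNReal.mul_div_cancel (hw₀ n) (hw_top n),
            ENNReal.inv_mul_cancel (hq₀ n) (hq_top n)]
      _ ≤ Φ (l n) * μ (A n) := by rw [hAμ]; gcongr; exact (hl n).le

lemma exists_mul_enorm_rpow_add_one_lt_ofReal {p : ℝ} (hp : 0 ≤ p) {θ : ℝ → ℝ}
    (h : ∀ a b : ℝ, ∃ l, a * |l| ^ p + b < θ l) {C : ℝ≥0∞} (hC : C ≠ ∞) :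
    ∃ l, C * (‖l‖ₑ ^ p + 1) < ENNReal.ofReal (θ l) := by
  obtain ⟨l, hl⟩ := h C.toReal C.toReal
  have hnonneg : 0 ≤ C.toReal * |l| ^ p + C.toReal := by positivity
  refine ⟨l, ?_⟩
  rw [Real.enorm_eq_ofReal_abs, ENNReal.ofReal_rpow_of_nonneg (abs_nonneg l) hp,
    ← ENNReal.ofReal_one, ← ENNReal.ofReal_add (by positivity) zero_le_one,
    ← ENNReal.ofReal_toReal hC, ← ENNReal.ofReal_mul ENNReal.toReal_nonneg,
    ENNReal.ofReal_lt_ofReal_iff', mul_add_one]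
  exact ⟨hl, hnonneg.trans_lt hl⟩

end MeasureTheory

theorem stmt19_general {Ω : Type*} [MeasurableSpace Ω] (μ : Measure Ω) [IsFiniteMeasure μ]
    (hna : ∀ A : Set Ω, MeasurableSet A → 0 < μ A →
      ∃ B ⊆ A, MeasurableSet B ∧ 0 < μ B ∧ μ B < μ A)
    (hpos : 0 < μ Set.univ)
    (p : NNReal)
    (θ : ℝ → ℝ)
    (hfin : ∀ f : Lp ℝ p μ, ∫⁻ t, ENNReal.ofReal (θ (f t)) ∂μ < ⊤) :
    ∃ a b : ℝ, ∀ l : ℝ, θ l ≤ a * |l| ^ (p : ℝ) + b := by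
  by_contra! hθ
  obtain ⟨f, hf, hf_top⟩ := Measure.IsNonatomic_s19.exists_memLp_lintegral_eq_top hna hpos.ne' p
    fun C hC => exists_mul_enorm_rpow_add_one_lt_ofReal p.2 hθ hC
  have hLp := hfin (hf.toLp f)
  rw [lintegral_congr_ae (hf.coeFn_toLp.mono fun x hx => by rw [hx]), hf_top] at hLp
  exact lt_irrefl ∞ hLp

/-- Finite-measure version of Statement 18: `θ(λ) ≤ a·|λ|^p + b`. -/
theorem stmt19 {Ω : Type*} [MeasurableSpace Ω] (μ : Measure Ω) [IsFiniteMeasure μ]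
    (hna : ∀ A : Set Ω, MeasurableSet A → 0 < μ A →
      ∃ B ⊆ A, MeasurableSet B ∧ 0 < μ B ∧ μ B < μ A)
    (hpos : 0 < μ Set.univ)
    (p : NNReal) (hp : 1 ≤ p)
    (θ : ℝ → ℝ) (hθc : Continuous θ) (hθ0 : ∀ l : ℝ, 0 ≤ θ l)
    (hfin : ∀ f : Lp ℝ p μ, ∫⁻ t, ENNReal.ofReal (θ (f t)) ∂μ < ⊤) :
    ∃ a b : ℝ, ∀ l : ℝ, θ l ≤ a * |l| ^ (p : ℝ) + b :=
  stmt19_general μ hna hpos p θ hfin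
end
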